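/- Let μ = ESN₂(ω,α,τ) with ω ∈ (−1,1), α = (α₁,α₂) ∈ ℝ², τ ∈ ℝ, and suppose α₁ < 0, α₂ < 0, α₁* < α₂* and α₁* < 0. Then lim_{x→∞} μ{y ∈ ℝ² : y₁ ≥ x and y₂ ≥ x} / μ{y ∈ ℝ² : y₁ ≥ x} = 0. -/

import Mathlib

set_option maxHeartbeats 1000000

open MeasureTheory Filter Matrix

/-- standard normal density -/
noncomputable def stdPdf (t : ℝ) : ℝ := Real.exp (-t^2/2) / Real.sqrt (2*Real.pi)

/-- standard normal cdf Φ -/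
noncomputable def stdCdf (x : ℝ) : ℝ := ∫ t in Set.Iic x, stdPdf t

/-- univariate extended skew-normal cdf Φ_{α,τ} -/
noncomputable def esnCdf (α τ x : ℝ) : ℝ :=
  ∫ t in Set.Iic x, stdPdf t * stdCdf (α*t+τ) / stdCdf (τ / Real.sqrt (1+α^2))

/-- bivariate standard normal density with correlation ω -/
noncomputable def phi2 (ω : ℝ) (x : ℝ × ℝ) : ℝ :=
  Real.exp (-(x.1^2 - 2*ω*x.1*x.2 + x.2^2)/(2*(1-ω^2))) / (2*Real.pi*Real.sqrt (1-ω^2))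

/-- bivariate extended skew-normal density -/
noncomputable def esn2Density (ω a1 a2 τ : ℝ) (x : ℝ × ℝ) : ℝ :=
  phi2 ω x * stdCdf (a1*x.1 + a2*x.2 + τ) / stdCdf (τ / Real.sqrt (1 + a1^2 + a2^2 + 2*ω*a1*a2))

/-- bivariate extended skew-normal distribution ESN₂(ω,α,τ) -/
noncomputable def esn2 (ω a1 a2 τ : ℝ) : Measure (ℝ × ℝ) :=
  volume.withDensity (fun x => ENNReal.ofReal (esn2Density ω a1 a2 τ x))

/-- marginal slant parameter α_j*; `aj` is α_j and `ak` is α_{3-j} -/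
noncomputable def astar (ω aj ak : ℝ) : ℝ := (aj + ω*ak) / Real.sqrt (1 + ak^2*(1-ω^2))

/-- marginal extension parameter τ_j*; `ak` is α_{3-j} -/
noncomputable def tstar (ω ak τ : ℝ) : ℝ := τ / Real.sqrt (1 + ak^2*(1-ω^2))

/-- ᾱ_j = √(1+α_j*²); `aj` is α_j and `ak` is α_{3-j} -/
noncomputable def abar (ω aj ak : ℝ) : ℝ := Real.sqrt (1 + (astar ω aj ak)^2)

section Helpers

lemma stdPdf_pos (t : ℝ) : 0 < stdPdf t := by
  unfold stdPdf
  positivity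

lemma stdPdf_eq (t : ℝ) : stdPdf t = Real.exp (-(1/2) * t^2) * (Real.sqrt (2*Real.pi))⁻¹ := by
  unfold stdPdf; rw [div_eq_mul_inv]; ring_nf

lemma integrable_stdPdf : Integrable stdPdf := by
  simp only [funext stdPdf_eq]
  exact (integrable_exp_neg_mul_sq (by norm_num)).mul_const _

lemma integral_stdPdf : ∫ t, stdPdf t = 1 := by
  simp only [funext stdPdf_eq]
  rw [integral_mul_const, integral_gaussian]
  rw [show (Real.pi / (1/2)) = 2 * Real.pi by ring]
  rw [mul_inv_cancel₀]
  positivity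

lemma stdCdf_le_one (z : ℝ) : stdCdf z ≤ 1 := by
  rw [← integral_stdPdf]
  exact setIntegral_le_integral integrable_stdPdf (Filter.Eventually.of_forall fun t => (stdPdf_pos t).le)

lemma stdCdf_lower (z : ℝ) :
    Real.exp (-(z^2+2*|z|+1)/2) / Real.sqrt (2*Real.pi) ≤ stdCdf z := by
  have h1 : (Set.Ioc (z-1) z) ⊆ Set.Iic z := Set.Ioc_subset_Iic_self
  have hsub : ∫ t in Set.Ioc (z-1) z, stdPdf t ≤ stdCdf z := by
    apply setIntegral_mono_set (integrable_stdPdf.integrableOn)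
      (Filter.Eventually.of_forall fun t => (stdPdf_pos t).le)
    exact Filter.Eventually.of_forall h1
  refine le_trans ?_ hsub
  have hconst : ∀ t ∈ Set.Ioc (z-1) z,
      Real.exp (-(z^2+2*|z|+1)/2) / Real.sqrt (2*Real.pi) ≤ stdPdf t := by
    intro t ht
    unfold stdPdf
    apply div_le_div_of_nonneg_right ?_ (by positivity) |>.trans_eq rfl
    · apply Real.exp_le_exp.2
      have h2 : t ≤ z := ht.2
      have h3 : z - 1 ≤ t := ht.1.le
      have : t^2 ≤ z^2 + 2*|z| + 1 := by
        have hz1 : -(|z|+1) ≤ t := by nlinarith [neg_abs_le z]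
        have hz2 : t ≤ |z| + 1 := by nlinarith [le_abs_self z]
        nlinarith [abs_nonneg z, sq_abs z]
      linarith
  have := setIntegral_ge_of_const_le (μ := volume) measurableSet_Ioc
    (by simp [Real.volume_Ioc]) hconst (integrable_stdPdf.integrableOn)
  simpa [Real.volume_Ioc] using this

lemma stdCdf_pos (z : ℝ) : 0 < stdCdf z :=
  lt_of_lt_of_le (by positivity) (stdCdf_lower z)

lemma stdCdf_upper {z : ℝ} (hz : z ≤ -1) : stdCdf z ≤ Real.exp (-z^2/2) := by
  have key : ∀ t ∈ Set.Iic z, stdPdf t ≤ Real.exp (-z^2/2) * Real.exp (t - z) := by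
    intro t ht
    simp only [Set.mem_Iic] at ht
    unfold stdPdf
    rw [← Real.exp_add]
    have h1 : Real.exp (-t^2/2) ≤ Real.exp (-z^2/2 + (t - z)) := by
      apply Real.exp_le_exp.2
      nlinarith
    calc Real.exp (-t^2/2) / Real.sqrt (2*Real.pi) ≤ Real.exp (-t^2/2) := by
          apply div_le_self (Real.exp_nonneg _)
          rw [show (1:ℝ) = Real.sqrt 1 by simp]
          apply Real.sqrt_le_sqrt; nlinarith [Real.pi_gt_three]
      _ ≤ _ := h1
  have hexp : IntegrableOn (fun t => Real.exp (-z^2/2) * Real.exp (t - z)) (Set.Iic z) := by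
    simp only [Real.exp_sub, show ∀ t:ℝ, Real.exp (-z^2/2) * (Real.exp t / Real.exp z)
      = Real.exp t * (Real.exp (-z^2/2) / Real.exp z) from fun t => by ring]
    exact (integrableOn_exp_Iic z).mul_const _
  have hint : ∫ t in Set.Iic z, stdPdf t ≤ ∫ t in Set.Iic z, Real.exp (-z^2/2) * Real.exp (t - z) := by
    exact setIntegral_mono_on integrable_stdPdf.integrableOn hexp measurableSet_Iic key
  have hval : ∫ t in Set.Iic z, Real.exp (-z^2/2) * Real.exp (t - z) = Real.exp (-z^2/2) := by
    rw [MeasureTheory.integral_const_mul]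
    have : ∫ t in Set.Iic z, Real.exp (t - z) = 1 := by
      simp only [Real.exp_sub]
      rw [MeasureTheory.integral_div, integral_exp_Iic, div_self (Real.exp_ne_zero z)]
    rw [this, mul_one]
  calc stdCdf z ≤ _ := hint
    _ = _ := hval

lemma gauss_ge (ω y1 y2 : ℝ) (hw : -1 < ω) (hw' : ω < 1) :
    (y1^2+y2^2)/2 ≤ (y1^2-2*ω*y1*y2+y2^2)/(1-ω^2) := by
  have h : 0 < 1-ω^2 := by nlinarith
  rw [div_le_div_iff₀ (by norm_num) h]
  nlinarith [sq_nonneg (ω*y1-y2), sq_nonneg (y1-ω*y2)]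

lemma Qf_id (ω a1 a2 y1 y2 : ℝ) (h : (1:ℝ)-ω^2 ≠ 0) :
    (y1^2-2*ω*y1*y2+y2^2)/(1-ω^2) + (a1*y1+a2*y2)^2 =
      (1/(1-ω^2)+a1^2)*y1^2 + 2*(a1*a2-ω/(1-ω^2))*y1*y2 + (1/(1-ω^2)+a2^2)*y2^2 := by
  field_simp
  ring

lemma quad_corner (A B C x y1 y2 : ℝ) (hC : 0 < C) (hAB : 0 < A+B) (hCB : 0 < C+B)
    (hdet : B^2 ≤ A*C) (hx : 0 ≤ x) (hy1 : x ≤ y1) (hy2 : x ≤ y2) :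
    (A+2*B+C)*x^2 ≤ A*y1^2+2*B*y1*y2+C*y2^2 := by
  have h1 : 0 ≤ y1 - x := by linarith
  have h2 : 0 ≤ y2 - x := by linarith
  have hk1 : 0 ≤ x*(y1-x)*(A+B)*C := by positivity
  have hk2 : 0 ≤ x*(y2-x)*(C+B)*C := by positivity
  have hk3 : 0 ≤ (C*(y2-x)+B*(y1-x))^2 := sq_nonneg _
  have hk4 : 0 ≤ (A*C - B^2)*(y1-x)^2 := by nlinarith
  nlinarith [hC, hk1, hk2, hk3, hk4]

lemma num_exp (ω a1 a2 τ A B C δ ρ' L : ℝ)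
    (hw : -1 < ω) (hw' : ω < 1)
    (hA : A = 1/(1-ω^2)+a1^2) (hB : B = a1*a2-ω/(1-ω^2)) (hC : C = 1/(1-ω^2)+a2^2)
    (hAB : 0 < A+B) (hCB : 0 < C+B) (hdet : B^2 ≤ A*C)
    (hδ0 : 0 ≤ δ) (hδ1 : δ ≤ 1)
    (hρ' : ρ' ≤ (1-δ)*(A+2*B+C))
    (hL : L = |τ| * (|a1|+|a2|))
    (x y1 y2 : ℝ) (hx : 0 ≤ x) (h1 : x ≤ y1) (h2 : x ≤ y2) :
    ρ'*x^2/2 + δ*(y1^2+y2^2)/4 - L*(y1+y2) ≤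
      (y1^2-2*ω*y1*y2+y2^2)/(2*(1-ω^2)) + (a1*y1+a2*y2+τ)^2/2 := by
  have hw2 : (0:ℝ) < 1-ω^2 := by nlinarith
  have hCpos : 0 < C := by rw [hC]; positivity
  have hQid := Qf_id ω a1 a2 y1 y2 hw2.ne'
  rw [← hA, ← hB, ← hC] at hQid
  have hcorner := quad_corner A B C x y1 y2 hCpos hAB hCB hdet hx h1 h2
  have hgauss := gauss_ge ω y1 y2 hw hw'
  have hQf2 : (y1^2+y2^2)/2 ≤ A*y1^2+2*B*y1*y2+C*y2^2 := by
    linarith [sq_nonneg (a1*y1+a2*y2), hgauss, hQid]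
  have hy1 : 0 ≤ y1 := hx.trans h1
  have hy2 : 0 ≤ y2 := hx.trans h2
  have ht1 : -(|τ| * |a1|) * y1 ≤ τ*(a1*y1) := by
    have h := neg_abs_le (τ*a1)
    rw [abs_mul] at h
    nlinarith
  have ht2 : -(|τ| * |a2|) * y2 ≤ τ*(a2*y2) := by
    have h := neg_abs_le (τ*a2)
    rw [abs_mul] at h
    nlinarith
  have hc1 : (1-δ)*((A+2*B+C)*x^2) ≤ (1-δ)*(A*y1^2+2*B*y1*y2+C*y2^2) :=
    mul_le_mul_of_nonneg_left hcorner (by linarith)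
  have hc2 : δ*((y1^2+y2^2)/2) ≤ δ*(A*y1^2+2*B*y1*y2+C*y2^2) :=
    mul_le_mul_of_nonneg_left hQf2 hδ0
  have hρx : ρ'*x^2 ≤ ((1-δ)*(A+2*B+C))*x^2 :=
    mul_le_mul_of_nonneg_right hρ' (sq_nonneg x)
  have hgoal : (y1^2-2*ω*y1*y2+y2^2)/(2*(1-ω^2)) = ((y1^2-2*ω*y1*y2+y2^2)/(1-ω^2))/2 := by
    rw [div_div, mul_comm ((1:ℝ)-ω^2) 2]
  rw [hgoal]
  have hsq : (a1*y1+a2*y2+τ)^2 = (a1*y1+a2*y2)^2 + 2*(τ*(a1*y1) + τ*(a2*y2)) + τ^2 := by ring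
  rw [hL]
  linarith [hc1, hc2, ht1, ht2, sq_nonneg τ, hQid, hρx, hsq,
    mul_nonneg (mul_nonneg (abs_nonneg τ) (abs_nonneg a2)) hy1,
    mul_nonneg (mul_nonneg (abs_nonneg τ) (abs_nonneg a1)) hy2]

lemma den_exp (ω a1 a2 τ A B C m σ c1 c0 : ℝ)
    (hw : -1 < ω) (hw' : ω < 1)
    (hA : A = 1/(1-ω^2)+a1^2) (hB : B = a1*a2-ω/(1-ω^2)) (hC : C = 1/(1-ω^2)+a2^2)
    (hm : m = -B/C) (hσ : σ = A - B^2/C) (hσ0 : 0 ≤ σ)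
    (hc1 : c1 = 2*σ + (2*|τ|+2)*(|a1|+|a2| * |m|))
    (hc0 : c0 = A+2*|B|+C + (2*|τ|+2)*(|a1|+|a2|) + 2*|τ| + τ^2 + 1)
    (x u v : ℝ) (hx : 0 ≤ x) (hu0 : 0 ≤ u) (hu1 : u ≤ 1) (hv0 : 0 ≤ v) (hv1 : v ≤ 1) :
    ((x+u)^2 - 2*ω*(x+u)*(m*x+v) + (m*x+v)^2)/(1-ω^2) + (a1*(x+u)+a2*(m*x+v)+τ)^2
      + 2*|a1*(x+u)+a2*(m*x+v)+τ| + 1 ≤ σ*x^2 + c1*x + c0 := by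
  have hw2 : (0:ℝ) < 1-ω^2 := by nlinarith
  have hCpos : 0 < C := by rw [hC]; positivity
  have hApos : 0 < A := by rw [hA]; positivity
  set y1 := x + u with hy1def
  set y2 := m*x + v with hy2def
  have hQid := Qf_id ω a1 a2 y1 y2 hw2.ne'
  rw [← hA, ← hB, ← hC] at hQid
  have hexp : A*y1^2+2*B*y1*y2+C*y2^2 = σ*x^2 + 2*σ*(x*u) + (A*u^2+2*B*u*v+C*v^2) := by
    rw [hy1def, hy2def, hm, hσ]
    field_simp
    ring
  have b1 : 2*σ*(x*u) ≤ 2*σ*x := by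
    nlinarith [mul_nonneg (mul_nonneg hσ0 hx) (sub_nonneg.2 hu1)]
  have b2 : A*u^2+2*B*u*v+C*v^2 ≤ A+2*|B|+C := by
    have e1 : A*u^2 ≤ A*1 := mul_le_mul_of_nonneg_left (by nlinarith) hApos.le
    have e2 : C*v^2 ≤ C*1 := mul_le_mul_of_nonneg_left (by nlinarith) hCpos.le
    have e3 : B*(u*v) ≤ |B| * 1 := by
      calc B*(u*v) ≤ |B*(u*v)| := le_abs_self _
        _ = |B| * |u*v| := abs_mul _ _
        _ ≤ |B| * 1 := by
            apply mul_le_mul_of_nonneg_left ?_ (abs_nonneg B)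
            rw [abs_of_nonneg (mul_nonneg hu0 hv0)]
            nlinarith
    linarith
  have hs : |a1*y1+a2*y2| ≤ |a1| * (x+1) + |a2| * (|m| * x+1) := by
    calc |a1*y1+a2*y2| ≤ |a1*y1| + |a2*y2| := abs_add_le _ _
      _ = |a1| * |y1| + |a2| * |y2| := by rw [abs_mul, abs_mul]
      _ ≤ |a1| * (x+1) + |a2| * (|m| * x+1) := by
          have hy1b : |y1| ≤ x+1 := by
            rw [abs_of_nonneg (by rw [hy1def]; linarith : (0:ℝ) ≤ y1), hy1def]; linarith
          have hy2b : |y2| ≤ |m| * x+1 := by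
            calc |y2| ≤ |m*x| + |v| := abs_add_le _ _
              _ ≤ |m| * x + 1 := by
                  rw [abs_mul, abs_of_nonneg hx, abs_of_nonneg hv0]; linarith
          have := abs_nonneg a1
          have := abs_nonneg a2
          gcongr
  have hz : |a1*y1+a2*y2+τ| ≤ |a1| * (x+1) + |a2| * (|m| * x+1) + |τ| :=
    (abs_add_le _ _).trans (by linarith)
  have b4 : τ*(a1*y1+a2*y2) ≤ |τ| * (|a1| * (x+1) + |a2| * (|m| * x+1)) := by
    calc τ*(a1*y1+a2*y2) ≤ |τ*(a1*y1+a2*y2)| := le_abs_self _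
      _ = |τ| * |a1*y1+a2*y2| := abs_mul _ _
      _ ≤ |τ| * (|a1| * (x+1) + |a2| * (|m| * x+1)) :=
          mul_le_mul_of_nonneg_left hs (abs_nonneg τ)
  have hsq : (a1*y1+a2*y2+τ)^2 = (a1*y1+a2*y2)^2 + 2*(τ*(a1*y1+a2*y2)) + τ^2 := by ring
  rw [hc1, hc0]
  clear_value y1 y2
  linarith [hQid, hexp, b1, b2, b4, hz, hsq]

lemma lintegral_prod_bound (c : ℝ) (hc : 0 ≤ c) (f : ℝ × ℝ → ℝ) (g1 g2 : ℝ → ℝ)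
    (hg1 : Measurable g1) (hg2 : Measurable g2)
    (hg1nn : ∀ t, 0 ≤ g1 t)
    (s t : Set ℝ)
    (hf : ∀ y ∈ s ×ˢ t, f y ≤ c * (g1 y.1 * g2 y.2)) :
    ∫⁻ y in s ×ˢ t, ENNReal.ofReal (f y) ≤
      ENNReal.ofReal c * ((∫⁻ u in s, ENNReal.ofReal (g1 u)) * (∫⁻ u in t, ENNReal.ofReal (g2 u))) := by
  have hmeas2 : Measurable (fun y : ℝ × ℝ => ENNReal.ofReal (g1 y.1) * ENNReal.ofReal (g2 y.2)) :=
    ((hg1.comp measurable_fst).ennreal_ofReal).mul ((hg2.comp measurable_snd).ennreal_ofReal)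
  have hmeas1 : Measurable (fun y : ℝ × ℝ =>
      ENNReal.ofReal c * (ENNReal.ofReal (g1 y.1) * ENNReal.ofReal (g2 y.2))) :=
    measurable_const.mul hmeas2
  calc ∫⁻ y in s ×ˢ t, ENNReal.ofReal (f y)
      ≤ ∫⁻ y in s ×ˢ t, ENNReal.ofReal c * (ENNReal.ofReal (g1 y.1) * ENNReal.ofReal (g2 y.2)) := by
        apply setLIntegral_mono hmeas1
        intro y hy
        calc ENNReal.ofReal (f y) ≤ ENNReal.ofReal (c * (g1 y.1 * g2 y.2)) :=
              ENNReal.ofReal_le_ofReal (hf y hy)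
          _ = _ := by rw [ENNReal.ofReal_mul hc, ENNReal.ofReal_mul (hg1nn _)]
    _ = ENNReal.ofReal c * ∫⁻ y in s ×ˢ t, ENNReal.ofReal (g1 y.1) * ENNReal.ofReal (g2 y.2) :=
        lintegral_const_mul _ hmeas2
    _ = _ := by
        rw [Measure.volume_eq_prod, ← Measure.prod_restrict,
          lintegral_prod_mul hg1.ennreal_ofReal.aemeasurable hg2.ennreal_ofReal.aemeasurable]

end Helpers

/-- Lemma 1, case (b): α₁,α₂ < 0 with α₁* < α₂* and α₁* < 0. -/
theorem esn2_joint_tail_case_b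
    (ω : ℝ) (hω : ω ∈ Set.Ioo (-1 : ℝ) 1) (a1 a2 τ : ℝ)
    (ha1 : a1 < 0) (ha2 : a2 < 0)
    (h1 : astar ω a1 a2 < astar ω a2 a1) (h2 : astar ω a1 a2 < 0) :
    Tendsto (fun x : ℝ =>
        ((esn2 ω a1 a2 τ) {y : ℝ × ℝ | x ≤ y.1 ∧ x ≤ y.2}).toReal /
        ((esn2 ω a1 a2 τ) {y : ℝ × ℝ | x ≤ y.1}).toReal)
      atTop (nhds 0) := by
  clear h1 h2
  obtain ⟨hw, hw'⟩ := hω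
  have hw2 : (0:ℝ) < 1 - ω^2 := by nlinarith
  set A : ℝ := 1/(1-ω^2) + a1^2 with hA
  set B : ℝ := a1*a2 - ω/(1-ω^2) with hB
  set C : ℝ := 1/(1-ω^2) + a2^2 with hC
  set σ : ℝ := A - B^2/C with hσ
  set ρ : ℝ := A + 2*B + C with hρ
  set δ : ℝ := (ρ - σ)/(2*ρ) with hδ
  set ρ' : ℝ := (ρ + σ)/2 with hρ'
  set L : ℝ := |τ| * (|a1|+|a2|) with hL
  set m : ℝ := -B/C with hm
  set c1 : ℝ := 2*σ + (2*|τ|+2)*(|a1|+|a2| * |m|) with hc1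
  set c0 : ℝ := A+2*|B|+C + (2*|τ|+2)*(|a1|+|a2|) + 2*|τ| + τ^2 + 1 with hc0
  set C0 : ℝ := stdCdf (τ / Real.sqrt (1 + a1^2 + a2^2 + 2*ω*a1*a2)) with hC0
  set K2π : ℝ := 2*Real.pi*Real.sqrt (1-ω^2) with hK2π
  set κ : ℝ := 1/(K2π * Real.sqrt (2*Real.pi)) with hκ
  set g : ℝ → ℝ := fun t => Real.exp (-δ*t^2/4 + L*t) with hg
  set KG : ℝ := ∫ t, g t with hKG
  have hgnn0 : ∀ t, 0 ≤ g t := fun t => Real.exp_nonneg _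
  clear_value A B C σ ρ δ ρ' L m c1 c0 C0 K2π κ g KG
  have hApos : 0 < A := by rw [hA]; positivity
  have hCpos : 0 < C := by rw [hC]; positivity
  have ha12 : a1 + a2 < 0 := by linarith
  have hABpos : 0 < A + B := by
    have hid : A + B = (1-ω)/(1-ω^2) + a1*(a1+a2) := by rw [hA, hB]; ring
    have f1 : 0 < (1-ω)/(1-ω^2) := div_pos (by linarith) hw2
    have f2 : 0 < a1*(a1+a2) := mul_pos_of_neg_of_neg ha1 ha12
    rw [hid]
    exact add_pos f1 f2
  have hCBpos : 0 < C + B := by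
    have hid : C + B = (1-ω)/(1-ω^2) + a2*(a1+a2) := by rw [hC, hB]; ring
    have f1 : 0 < (1-ω)/(1-ω^2) := div_pos (by linarith) hw2
    have f2 : 0 < a2*(a1+a2) := mul_pos_of_neg_of_neg ha2 ha12
    rw [hid]
    exact add_pos f1 f2
  have hdetid : A*C - B^2 = (1+a1^2+a2^2+2*ω*a1*a2)/((1-ω^2)) := by
    rw [hA, hB, hC]; field_simp; ring
  have hdetpos : 0 < A*C - B^2 := by
    rw [hdetid]
    apply div_pos ?_ hw2
    nlinarith [sq_nonneg (a1+ω*a2), mul_nonneg (sq_nonneg a2) hw2.le]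
  have hdet : B^2 ≤ A*C := by linarith
  have hσ0 : 0 ≤ σ := by
    rw [hσ, sub_nonneg, div_le_iff₀ hCpos]
    exact hdet
  have hσρ : σ < ρ := by
    rw [← sub_pos, show ρ - σ = (C+B)^2/C by rw [hρ, hσ]; field_simp; ring]
    exact div_pos (pow_pos hCBpos 2) hCpos
  have hρpos : 0 < ρ := lt_of_le_of_lt hσ0 hσρ
  have hδpos : 0 < δ := by rw [hδ]; exact div_pos (by linarith) (by linarith)
  have hδ0 : 0 ≤ δ := hδpos.le
  have hδ1 : δ ≤ 1 := by
    rw [hδ, div_le_one (by linarith)]; linarith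
  have hρ'le : ρ' ≤ (1-δ)*ρ := by
    have heq : (1-δ)*ρ = (ρ+σ)/2 := by rw [hδ]; field_simp; ring
    rw [hρ', heq]
  have hερ : 0 < ρ' - σ := by rw [hρ']; linarith
  have hC0pos : 0 < C0 := by rw [hC0]; exact stdCdf_pos _
  have hC0le : C0 ≤ 1 := by rw [hC0]; exact stdCdf_le_one _
  have hK2πpos : 0 < K2π := by
    rw [hK2π]
    have := Real.sqrt_pos.2 hw2
    positivity
  have hκpos : 0 < κ := by
    rw [hκ]
    have : (0:ℝ) < Real.sqrt (2*Real.pi) := Real.sqrt_pos.2 (by positivity)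
    positivity
  have hgid : ∀ t, g t = Real.exp (L^2/δ) * Real.exp (-(δ/4)*(t - 2*L/δ)^2) := by
    intro t
    simp only [hg]
    rw [← Real.exp_add]
    congr 1
    field_simp [hδpos.ne']
    ring
  have hgint : Integrable g := by
    have base : Integrable (fun t : ℝ => Real.exp (-(δ/4)*t^2)) :=
      integrable_exp_neg_mul_sq (by linarith)
    have shifted : Integrable (fun t : ℝ => Real.exp (-(δ/4)*(t - 2*L/δ)^2)) :=
      base.comp_sub_right (2*L/δ)
    exact (shifted.const_mul (Real.exp (L^2/δ))).congr
      (Filter.Eventually.of_forall fun t => (hgid t).symm)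
  have hKG0 : 0 ≤ KG := by rw [hKG]; exact integral_nonneg hgnn0
  have hglint : ∫⁻ t, ENNReal.ofReal (g t) = ENNReal.ofReal KG := by
    rw [hKG]
    exact (ofReal_integral_eq_lintegral_ofReal hgint
      (Filter.Eventually.of_forall hgnn0)).symm
  have hgmeas : Measurable g := by rw [hg]; fun_prop
  -- measurability of the density
  have hcdfmono : Monotone stdCdf := by
    intro a b hab
    exact setIntegral_mono_set integrable_stdPdf.integrableOn
      (Filter.Eventually.of_forall fun t => (stdPdf_pos t).le)
      (Filter.Eventually.of_forall (Set.Iic_subset_Iic.2 hab))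
  have hcdfmeas : Measurable stdCdf := hcdfmono.measurable
  have hlinmeas : Measurable (fun y : ℝ × ℝ => a1*y.1 + a2*y.2 + τ) := by fun_prop
  have hphi2cont : Continuous (phi2 ω) := by unfold phi2; fun_prop
  have hdensmeas : Measurable (esn2Density ω a1 a2 τ) := by
    unfold esn2Density
    exact (hphi2cont.measurable.mul (hcdfmeas.comp hlinmeas)).div_const _
  have hdensnn : ∀ y, 0 ≤ esn2Density ω a1 a2 τ y := by
    intro y
    unfold esn2Density
    apply div_nonneg (mul_nonneg ?_ (stdCdf_pos _).le) (stdCdf_pos _).le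
    unfold phi2
    positivity
  have happly : ∀ S : Set (ℝ × ℝ), MeasurableSet S →
      esn2 ω a1 a2 τ S = ∫⁻ y in S, ENNReal.ofReal (esn2Density ω a1 a2 τ y) := by
    intro S hS
    rw [esn2, withDensity_apply _ hS]
  -- density representation
  have hrepr : ∀ y : ℝ × ℝ, esn2Density ω a1 a2 τ y =
      Real.exp (-(y.1^2 - 2*ω*y.1*y.2 + y.2^2)/(2*(1-ω^2))) * stdCdf (a1*y.1 + a2*y.2 + τ) / (K2π*C0) := by
    intro y
    unfold esn2Density phi2
    rw [← hC0, ← hK2π]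
    ring
  have hKC : 0 < K2π * C0 := mul_pos hK2πpos hC0pos
  -- finiteness of the measure
  have hg0int : Integrable (fun s : ℝ => Real.exp (-(s^2)/4)) := by
    have hg0 : ∀ s : ℝ, Real.exp (-(s^2)/4) = Real.exp (-(1/4 : ℝ)*s^2) := fun s => by
      congr 1; ring
    simp only [hg0]
    exact integrable_exp_neg_mul_sq (by norm_num)
  have hg0meas : Measurable (fun s : ℝ => Real.exp (-(s^2)/4)) := by fun_prop
  have hg0nn : ∀ s : ℝ, 0 ≤ Real.exp (-(s^2)/4) := fun s => Real.exp_nonneg _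
  have hptuniv : ∀ y ∈ (Set.univ : Set ℝ) ×ˢ (Set.univ : Set ℝ), esn2Density ω a1 a2 τ y ≤
      (1/(K2π*C0)) * (Real.exp (-(y.1^2)/4) * Real.exp (-(y.2^2)/4)) := by
    intro y _
    rw [hrepr y]
    have hgg : Real.exp (-(y.1^2 - 2*ω*y.1*y.2 + y.2^2)/(2*(1-ω^2))) ≤
        Real.exp (-(y.1^2)/4) * Real.exp (-(y.2^2)/4) := by
      rw [← Real.exp_add]
      apply Real.exp_le_exp.2
      have h := gauss_ge ω y.1 y.2 hw hw'
      have hd : (-(y.1^2 - 2*ω*y.1*y.2 + y.2^2))/(2*(1-ω^2)) =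
          -((y.1^2 - 2*ω*y.1*y.2 + y.2^2)/(1-ω^2))/2 := by
        rw [neg_div, neg_div, div_div, mul_comm ((1:ℝ)-ω^2) 2]
      rw [hd]
      linarith only [h]
    calc Real.exp (-(y.1^2 - 2*ω*y.1*y.2 + y.2^2)/(2*(1-ω^2))) * stdCdf (a1*y.1 + a2*y.2 + τ) / (K2π*C0)
        ≤ Real.exp (-(y.1^2 - 2*ω*y.1*y.2 + y.2^2)/(2*(1-ω^2))) * 1 / (K2π*C0) := by
          rw [div_eq_mul_inv, div_eq_mul_inv]
          exact mul_le_mul_of_nonneg_right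
            (mul_le_mul_of_nonneg_left (stdCdf_le_one _) (Real.exp_nonneg _))
            (inv_nonneg.mpr hKC.le)
      _ ≤ (Real.exp (-(y.1^2)/4) * Real.exp (-(y.2^2)/4)) * 1 / (K2π*C0) := by
          rw [div_eq_mul_inv, div_eq_mul_inv]
          exact mul_le_mul_of_nonneg_right
            (mul_le_mul_of_nonneg_right hgg zero_le_one) (inv_nonneg.mpr hKC.le)
      _ = (1/(K2π*C0)) * (Real.exp (-(y.1^2)/4) * Real.exp (-(y.2^2)/4)) := by ring
  have hunivle : esn2 ω a1 a2 τ Set.univ ≤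
      ENNReal.ofReal (1/(K2π*C0)) * (ENNReal.ofReal (∫ s, Real.exp (-(s^2)/4)) *
        ENNReal.ofReal (∫ s, Real.exp (-(s^2)/4))) := by
    rw [happly _ MeasurableSet.univ,
      show (Set.univ : Set (ℝ×ℝ)) = (Set.univ : Set ℝ) ×ˢ (Set.univ : Set ℝ) from
        (Set.univ_prod_univ).symm]
    refine (lintegral_prod_bound _ (div_pos one_pos hKC).le _ _ _ hg0meas hg0meas hg0nn _ _
      hptuniv).trans ?_
    rw [Measure.restrict_univ,
      ← ofReal_integral_eq_lintegral_ofReal hg0int (Filter.Eventually.of_forall hg0nn)]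
  have hfin : ∀ S : Set (ℝ × ℝ), esn2 ω a1 a2 τ S ≠ ⊤ := by
    intro S
    have h1 : esn2 ω a1 a2 τ S ≤ esn2 ω a1 a2 τ Set.univ := measure_mono (Set.subset_univ S)
    have h2 : ENNReal.ofReal (1/(K2π*C0)) * (ENNReal.ofReal (∫ s, Real.exp (-(s^2)/4)) *
        ENNReal.ofReal (∫ s, Real.exp (-(s^2)/4))) < ⊤ := by
      exact ENNReal.mul_lt_top ENNReal.ofReal_lt_top
        (ENNReal.mul_lt_top ENNReal.ofReal_lt_top ENNReal.ofReal_lt_top)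
    exact ((h1.trans hunivle).trans_lt h2).ne
  -- threshold
  set x₀ : ℝ := max 1 ((1+|τ|)/(-(a1+a2))) with hx₀
  have hx₀1 : (1:ℝ) ≤ x₀ := by rw [hx₀]; exact le_max_left _ _
  have hzbound : ∀ x, x₀ ≤ x → ∀ y1 y2 : ℝ, x ≤ y1 → x ≤ y2 → a1*y1+a2*y2+τ ≤ -1 := by
    intro x hx y1 y2 hy1 hy2
    have hb1 : a1*y1 ≤ a1*x := mul_le_mul_of_nonpos_left hy1 ha1.le
    have hb2 : a2*y2 ≤ a2*x := mul_le_mul_of_nonpos_left hy2 ha2.le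
    have h3 : (1+|τ|)/(-(a1+a2)) ≤ x := le_trans (by rw [hx₀] at hx ⊢; exact le_max_right _ _) hx
    have h4 : 1+|τ| ≤ x*(-(a1+a2)) := by
      rw [div_le_iff₀ (by linarith only [ha12])] at h3
      linarith only [h3]
    have h5 : τ ≤ |τ| := le_abs_self τ
    nlinarith only [hb1, hb2, h4, h5]
  -- pointwise numerator bound
  have hnumpt : ∀ x, x₀ ≤ x → ∀ y : ℝ × ℝ, y ∈ Set.Ici x ×ˢ Set.Ici x →
      esn2Density ω a1 a2 τ y ≤ (Real.exp (-ρ'*x^2/2)/(K2π*C0)) * (g y.1 * g y.2) := by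
    intro x hx y hy
    rw [Set.mem_prod, Set.mem_Ici, Set.mem_Ici] at hy
    obtain ⟨hy1, hy2⟩ := hy
    have hx0 : (0:ℝ) ≤ x := by linarith only [hx₀1, hx]
    have hz := hzbound x hx y.1 y.2 hy1 hy2
    have hΦ := stdCdf_upper hz
    have hρ'2 : ρ' ≤ (1-δ)*(A+2*B+C) := by rw [← hρ]; exact hρ'le
    have hkey := num_exp ω a1 a2 τ A B C δ ρ' L hw hw' hA hB hC hABpos hCBpos hdet hδ0 hδ1
      hρ'2 hL x y.1 y.2 hx0 hy1 hy2
    have hexp : Real.exp (-(y.1^2-2*ω*y.1*y.2+y.2^2)/(2*(1-ω^2))) * stdCdf (a1*y.1+a2*y.2+τ)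
        ≤ Real.exp (-ρ'*x^2/2) * (g y.1 * g y.2) := by
      calc Real.exp (-(y.1^2-2*ω*y.1*y.2+y.2^2)/(2*(1-ω^2))) * stdCdf (a1*y.1+a2*y.2+τ)
          ≤ Real.exp (-(y.1^2-2*ω*y.1*y.2+y.2^2)/(2*(1-ω^2))) *
            Real.exp (-(a1*y.1+a2*y.2+τ)^2/2) :=
            mul_le_mul_of_nonneg_left hΦ (Real.exp_nonneg _)
        _ ≤ Real.exp (-ρ'*x^2/2) * (g y.1 * g y.2) := by
            simp only [hg]
            rw [← Real.exp_add, ← Real.exp_add, ← Real.exp_add]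
            apply Real.exp_le_exp.2
            have hd : (-(y.1^2-2*ω*y.1*y.2+y.2^2))/(2*(1-ω^2)) =
                -((y.1^2-2*ω*y.1*y.2+y.2^2)/(2*(1-ω^2))) := neg_div _ _
            rw [hd]
            have hd2 : (-(a1*y.1+a2*y.2+τ)^2)/2 = -((a1*y.1+a2*y.2+τ)^2/2) := neg_div _ _
            linarith only [hkey, hd2]
    rw [hrepr y, div_mul_eq_mul_div, div_eq_mul_inv, div_eq_mul_inv]
    exact mul_le_mul_of_nonneg_right hexp (inv_nonneg.mpr hKC.le)
  -- numerator measure bound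
  have hnum : ∀ x, x₀ ≤ x → ((esn2 ω a1 a2 τ) {y : ℝ × ℝ | x ≤ y.1 ∧ x ≤ y.2}).toReal ≤
      (Real.exp (-ρ'*x^2/2)/(K2π*C0)) * KG^2 := by
    intro x hx
    have hSeq : {y : ℝ × ℝ | x ≤ y.1 ∧ x ≤ y.2} = Set.Ici x ×ˢ Set.Ici x := by
      ext y; simp only [Set.mem_setOf_eq, Set.mem_prod, Set.mem_Ici]
    have hcx : (0:ℝ) ≤ Real.exp (-ρ'*x^2/2)/(K2π*C0) := div_nonneg (Real.exp_nonneg _) hKC.le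
    have hle : esn2 ω a1 a2 τ {y : ℝ × ℝ | x ≤ y.1 ∧ x ≤ y.2} ≤
        ENNReal.ofReal ((Real.exp (-ρ'*x^2/2)/(K2π*C0)) * (KG * KG)) := by
      rw [happly _ (by rw [hSeq]; exact measurableSet_Ici.prod measurableSet_Ici), hSeq]
      refine (lintegral_prod_bound _ hcx _ g g hgmeas hgmeas hgnn0 _ _ (hnumpt x hx)).trans ?_
      rw [ENNReal.ofReal_mul hcx, ENNReal.ofReal_mul hKG0]
      refine mul_le_mul_right (mul_le_mul' ?_ ?_) _ <;>
        exact (setLIntegral_le_lintegral _ _).trans (le_of_eq hglint)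
    have h2 := ENNReal.toReal_le_of_le_ofReal
      (mul_nonneg hcx (mul_nonneg hKG0 hKG0)) hle
    rw [pow_two KG]
    exact h2
  -- pointwise denominator bound
  have hdenpt : ∀ x, 0 ≤ x → ∀ y : ℝ × ℝ, y ∈ Set.Icc x (x+1) ×ˢ Set.Icc (m*x) (m*x+1) →
      κ * Real.exp (-(σ*x^2+c1*x+c0)/2) ≤ esn2Density ω a1 a2 τ y := by
    intro x hx y hy
    rw [Set.mem_prod, Set.mem_Icc, Set.mem_Icc] at hy
    obtain ⟨⟨hu1, hu2⟩, hv1, hv2⟩ := hy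
    have hkey := den_exp ω a1 a2 τ A B C m σ c1 c0 hw hw' hA hB hC hm hσ hσ0 hc1 hc0
      x (y.1 - x) (y.2 - m*x) hx (by linarith only [hu1]) (by linarith only [hu2])
      (by linarith only [hv1]) (by linarith only [hv2])
    rw [show x + (y.1 - x) = y.1 from by ring, show m*x + (y.2 - m*x) = y.2 from by ring] at hkey
    have hΦ := stdCdf_lower (a1*y.1+a2*y.2+τ)
    rw [hrepr y]
    calc κ * Real.exp (-(σ*x^2+c1*x+c0)/2)
        ≤ κ * Real.exp (-((y.1^2-2*ω*y.1*y.2+y.2^2)/(1-ω^2) + (a1*y.1+a2*y.2+τ)^2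
            + 2*|a1*y.1+a2*y.2+τ| + 1)/2) := by
          apply mul_le_mul_of_nonneg_left ?_ hκpos.le
          apply Real.exp_le_exp.2
          have h9 := neg_le_neg hkey
          linarith only [h9]
      _ = Real.exp (-(y.1^2-2*ω*y.1*y.2+y.2^2)/(2*(1-ω^2))) *
          (Real.exp (-((a1*y.1+a2*y.2+τ)^2+2*|a1*y.1+a2*y.2+τ|+1)/2) / Real.sqrt (2*Real.pi))
            / K2π := by
          rw [hκ, show Real.exp (-((y.1^2-2*ω*y.1*y.2+y.2^2)/(1-ω^2) + (a1*y.1+a2*y.2+τ)^2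
            + 2*|a1*y.1+a2*y.2+τ| + 1)/2) = Real.exp (-(y.1^2-2*ω*y.1*y.2+y.2^2)/(2*(1-ω^2))) *
            Real.exp (-((a1*y.1+a2*y.2+τ)^2+2*|a1*y.1+a2*y.2+τ|+1)/2) from by
              rw [← Real.exp_add]
              congr 1
              rw [show -(y.1^2-2*ω*y.1*y.2+y.2^2)/(2*(1-ω^2)) =
                -((y.1^2-2*ω*y.1*y.2+y.2^2)/(1-ω^2))/2 from by
                  rw [neg_div, neg_div, div_div, mul_comm ((1:ℝ)-ω^2) 2]]
              ring]
          ring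
      _ ≤ Real.exp (-(y.1^2-2*ω*y.1*y.2+y.2^2)/(2*(1-ω^2))) * stdCdf (a1*y.1+a2*y.2+τ) / K2π := by
          rw [div_eq_mul_inv, div_eq_mul_inv]
          apply mul_le_mul_of_nonneg_right ?_ (inv_nonneg.mpr hK2πpos.le)
          apply mul_le_mul_of_nonneg_left ?_ (Real.exp_nonneg _)
          exact hΦ
      _ ≤ Real.exp (-(y.1^2-2*ω*y.1*y.2+y.2^2)/(2*(1-ω^2))) * stdCdf (a1*y.1+a2*y.2+τ) / (K2π*C0) := by
          apply div_le_div_of_nonneg_left ?_ hKC ?_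
          · exact mul_nonneg (Real.exp_nonneg _) (stdCdf_pos _).le
          · exact mul_le_of_le_one_right hK2πpos.le hC0le
  -- denominator measure bound
  have hden : ∀ x, 0 ≤ x → ENNReal.ofReal (κ * Real.exp (-(σ*x^2+c1*x+c0)/2)) ≤
      esn2 ω a1 a2 τ {y : ℝ × ℝ | x ≤ y.1} := by
    intro x hx
    have hTmeas : MeasurableSet {y : ℝ × ℝ | x ≤ y.1} := measurable_fst measurableSet_Ici
    have hBmeas : MeasurableSet (Set.Icc x (x+1) ×ˢ Set.Icc (m*x) (m*x+1)) :=
      measurableSet_Icc.prod measurableSet_Icc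
    have hsub : Set.Icc x (x+1) ×ˢ Set.Icc (m*x) (m*x+1) ⊆ {y : ℝ × ℝ | x ≤ y.1} :=
      fun y hy => (Set.mem_prod.1 hy).1.1
    have hvol : volume (Set.Icc x (x+1) ×ˢ Set.Icc (m*x) (m*x+1)) = 1 := by
      rw [Measure.volume_eq_prod, Measure.prod_prod, Real.volume_Icc, Real.volume_Icc]
      norm_num
    calc ENNReal.ofReal (κ * Real.exp (-(σ*x^2+c1*x+c0)/2))
        = ENNReal.ofReal (κ * Real.exp (-(σ*x^2+c1*x+c0)/2)) *
            volume (Set.Icc x (x+1) ×ˢ Set.Icc (m*x) (m*x+1)) := by rw [hvol, mul_one]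
      _ = ∫⁻ _ in Set.Icc x (x+1) ×ˢ Set.Icc (m*x) (m*x+1),
            ENNReal.ofReal (κ * Real.exp (-(σ*x^2+c1*x+c0)/2)) :=
          (setLIntegral_const _ _).symm
      _ ≤ ∫⁻ y in Set.Icc x (x+1) ×ˢ Set.Icc (m*x) (m*x+1),
            ENNReal.ofReal (esn2Density ω a1 a2 τ y) :=
          setLIntegral_mono hdensmeas.ennreal_ofReal
            (fun y hy => ENNReal.ofReal_le_ofReal (hdenpt x hx y hy))
      _ = esn2 ω a1 a2 τ (Set.Icc x (x+1) ×ˢ Set.Icc (m*x) (m*x+1)) := (happly _ hBmeas).symm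
      _ ≤ esn2 ω a1 a2 τ {y : ℝ × ℝ | x ≤ y.1} := measure_mono hsub
  -- final squeeze
  apply tendsto_of_tendsto_of_tendsto_of_le_of_le' (g := fun _ : ℝ => (0:ℝ))
    (h := fun x : ℝ => ((Real.exp (-ρ'*x^2/2)/(K2π*C0)) * KG^2) /
      (κ * Real.exp (-(σ*x^2+c1*x+c0)/2))) tendsto_const_nhds ?_ ?_ ?_
  · -- the dominating expression tends to 0
    have hrw : ∀ x : ℝ, ((Real.exp (-ρ'*x^2/2)/(K2π*C0)) * KG^2) /
        (κ * Real.exp (-(σ*x^2+c1*x+c0)/2)) =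
        (KG^2/((K2π*C0)*κ)) * Real.exp ((-(ρ'-σ)/2*x + c1/2)*x + c0/2) := by
      intro x
      rw [show Real.exp ((-(ρ'-σ)/2*x + c1/2)*x + c0/2) =
          Real.exp (-ρ'*x^2/2) / Real.exp (-(σ*x^2+c1*x+c0)/2) from by
        rw [← Real.exp_sub]; congr 1; ring]
      field_simp
    simp only [hrw]
    have hlim : Tendsto (fun x : ℝ => (-(ρ'-σ)/2*x + c1/2)*x + c0/2) atTop atBot :=
      tendsto_atBot_add_const_right _ (c0/2)
        ((tendsto_atBot_add_const_right _ (c1/2)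
          (tendsto_id.const_mul_atTop_of_neg (by linarith only [hερ]))).atBot_mul_atTop₀ tendsto_id)
    have hcomp := Real.tendsto_exp_atBot.comp hlim
    have := hcomp.const_mul (KG^2/((K2π*C0)*κ))
    simpa using this
  · exact Filter.Eventually.of_forall fun x =>
      div_nonneg ENNReal.toReal_nonneg ENNReal.toReal_nonneg
  · filter_upwards [eventually_ge_atTop x₀] with x hx
    have hx0 : (0:ℝ) ≤ x := by linarith only [hx₀1, hx]
    have hN := hnum x hx
    have hD := hden x hx0
    have hDpos : 0 < κ * Real.exp (-(σ*x^2+c1*x+c0)/2) := mul_pos hκpos (Real.exp_pos _)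
    have hDr : κ * Real.exp (-(σ*x^2+c1*x+c0)/2) ≤
        ((esn2 ω a1 a2 τ) {y : ℝ × ℝ | x ≤ y.1}).toReal := by
      have h3 := ENNReal.toReal_mono (hfin _) hD
      rwa [ENNReal.toReal_ofReal hDpos.le] at h3
    exact div_le_div₀ (mul_nonneg (div_nonneg (Real.exp_nonneg _) hKC.le) (sq_nonneg KG))
      hN hDpos hDr
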